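/- Let Ω ⊂ ℝ³ × ℝ be open and let u : Ω → ℝ be twice continuously differentiable. Then at every point (x,t) ∈ Ω with t ≠ 0 there holds the pointwise identity (u_tt − Δu + u⁵)(t u_t + x·∇u + u) = ∂_t( t Q₀ + u_t u ) − div_x( t P₀ ) + R₀, where Q₀ = ½|u_t|² + ½|∇u|² + |u|⁶/6 + ((x/t)·∇u) u_t, P₀ = (x/t)( ½|u_t|² − ½|∇u|² − |u|⁶/6 ) + ( u_t + (x/t)·∇u + u/t ) ∇u, and R₀ = |u|⁶/3. -/

import Mathlib

open MeasureTheory Filter Set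

noncomputable section

/-- Euclidean 3-space. -/
abbrev E3 := EuclideanSpace ℝ (Fin 3)

/-- First time derivative `u_t` of `u = u(x,t)`. -/
noncomputable def ut (u : E3 × ℝ → ℝ) (x : E3) (t : ℝ) : ℝ := deriv (fun s => u (x, s)) t

/-- Second time derivative `u_tt` of `u = u(x,t)`. -/
noncomputable def utt (u : E3 × ℝ → ℝ) (x : E3) (t : ℝ) : ℝ :=
  deriv (fun s => deriv (fun r => u (x, r)) s) t

/-- Spatial gradient `∇u` of `u = u(x,t)`. -/
noncomputable def sgrad (u : E3 × ℝ → ℝ) (x : E3) (t : ℝ) : E3 := gradient (fun y => u (y, t)) x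

/-- Spatial Laplacian `Δu` of `u = u(x,t)`, as the sum of the second derivatives in the
coordinate directions. -/
noncomputable def slap (u : E3 × ℝ → ℝ) (x : E3) (t : ℝ) : ℝ :=
  ∑ i : Fin 3, fderiv ℝ (fun y => fderiv ℝ (fun z => u (z, t)) y (EuclideanSpace.single i 1)) x
      (EuclideanSpace.single i 1)

/-- The quantity `Q₀ = ½|u_t|² + ½|∇u|² + |u|⁶/6 + ((x/t)·∇u) u_t`. -/
noncomputable def Q0 (u : E3 × ℝ → ℝ) (x : E3) (t : ℝ) : ℝ :=
  (ut u x t) ^ 2 / 2 + ‖sgrad u x t‖ ^ 2 / 2 + |u (x, t)| ^ 6 / 6 +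
    (inner ℝ (t⁻¹ • x) (sgrad u x t) : ℝ) * ut u x t

/-- The vector field
`P₀ = (x/t)(½|u_t|² − ½|∇u|² − |u|⁶/6) + (u_t + (x/t)·∇u + u/t) ∇u`. -/
noncomputable def P0 (u : E3 × ℝ → ℝ) (x : E3) (t : ℝ) : E3 :=
  ((ut u x t) ^ 2 / 2 - ‖sgrad u x t‖ ^ 2 / 2 - |u (x, t)| ^ 6 / 6) • (t⁻¹ • x) +
    (ut u x t + (inner ℝ (t⁻¹ • x) (sgrad u x t) : ℝ) + u (x, t) / t) • sgrad u x t

/-- Spatial divergence of a vector field `F : ℝ³ → ℝ³`. -/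
noncomputable def divx (F : E3 → E3) (x : E3) : ℝ :=
  ∑ i : Fin 3, (inner ℝ (fderiv ℝ F x (EuclideanSpace.single i 1)) (EuclideanSpace.single i 1) : ℝ)

/-! Since `t ≠ 0`, the weights `x/t` and `1/t` cancel against `t`, so that
`t P₀ = S x + N ∇u` with `S = ½u_t² − ½|∇u|² − u⁶/6` and `N = t u_t + x·∇u + u` the multiplier,
and `t Q₀ = t (½u_t² + ½|∇u|² + u⁶/6) + (x·∇u) u_t`. Expanding `∂_t` and `div_x` by the product
rule (with `div_x x = 3`) expresses both sides through the second-order jet of `u` at `(x, t)`;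
the terms `x·(D²ₓu ∇u)` and `∇u·(D²ₓu x)` cancel by symmetry of the spatial Hessian, the terms
`∇u·∂_t∇u` and `∇u·∇u_t` by symmetry of mixed partials, and what remains is an algebraic identity. -/

open InnerProductSpace
open scoped RealInnerProductSpace Topology

theorem ContDiffAt.differentiableAt_fderiv {E F : Type*} [NormedAddCommGroup E]
    [NormedSpace ℝ E] [NormedAddCommGroup F] [NormedSpace ℝ F] {f : E → F} {x : E}
    (h : ContDiffAt ℝ 2 f x) : DifferentiableAt ℝ (fderiv ℝ f) x :=
  (h.fderiv_right (m := 1) (by norm_num)).differentiableAt one_ne_zero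

section Gradient

variable {F : Type*} [NormedAddCommGroup F] [InnerProductSpace ℝ F] [CompleteSpace F]
  {v : F → ℝ} {x : F}

theorem hasFDerivAt_gradient (h : DifferentiableAt ℝ (fderiv ℝ v) x) :
    HasFDerivAt (gradient v)
      ((toDual ℝ F).symm.toContinuousLinearEquiv.toContinuousLinearMap.comp
        (fderiv ℝ (fderiv ℝ v) x)) x :=
  (toDual ℝ F).symm.toContinuousLinearEquiv.hasFDerivAt.comp x h.hasFDerivAt

theorem inner_fderiv_gradient (h : DifferentiableAt ℝ (fderiv ℝ v) x) (a b : F) :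
    ⟪fderiv ℝ (gradient v) x a, b⟫ = fderiv ℝ (fderiv ℝ v) x a b := by
  simp [(hasFDerivAt_gradient h).fderiv, toDual_symm_apply]

theorem ContDiffAt.inner_fderiv_gradient_comm (h : ContDiffAt ℝ 2 v x) (a b : F) :
    ⟪fderiv ℝ (gradient v) x a, b⟫ = ⟪fderiv ℝ (gradient v) x b, a⟫ := by
  rw [inner_fderiv_gradient h.differentiableAt_fderiv,
    inner_fderiv_gradient h.differentiableAt_fderiv, h.isSymmSndFDerivAt (by simp)]

end Gradient

section Divergence

theorem divx_eq_trace (F : E3 → E3) (x : E3) :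
    divx F x = LinearMap.trace ℝ E3 (fderiv ℝ F x) := by
  rw [LinearMap.trace_eq_sum_inner _ (EuclideanSpace.basisFun (Fin 3) ℝ), divx]
  simp [real_inner_comm]

variable {F G : E3 → E3} {x : E3}

theorem divx_add (hF : DifferentiableAt ℝ F x) (hG : DifferentiableAt ℝ G x) :
    divx (fun y => F y + G y) x = divx F x + divx G x := by
  simp only [divx_eq_trace, fderiv_fun_add hF hG, ContinuousLinearMap.toLinearMap_add, map_add]

theorem divx_smul {φ : E3 → ℝ} {φ' : E3 →L[ℝ] ℝ} (hφ : HasFDerivAt φ φ' x)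
    (hF : DifferentiableAt ℝ F x) :
    divx (fun y => φ y • F y) x = φ' (F x) + φ x * divx F x := by
  simp only [divx_eq_trace, fderiv_fun_smul hφ.differentiableAt hF, hφ.fderiv,
    ContinuousLinearMap.toLinearMap_add, ContinuousLinearMap.toLinearMap_smul, map_add, map_smul,
    smul_eq_mul, add_comm (φ' (F x))]
  congr 1
  exact LinearMap.trace_smulRight _ _

theorem divx_id : divx (fun y => y) x = 3 := by
  simp [divx_eq_trace]

end Divergence

section PartialDerivatives

variable {u : E3 × ℝ → ℝ} {x : E3} {t : ℝ}

theorem ut_eq_fderiv_apply (h : DifferentiableAt ℝ u (x, t)) :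
    ut u x t = fderiv ℝ u (x, t) (0, 1) :=
  (h.hasFDerivAt.comp_hasDerivAt t (hasFDerivAt_prodMk_right x t).hasDerivAt).deriv

theorem sgrad_eq_toDual_symm (h : DifferentiableAt ℝ u (x, t)) :
    sgrad u x t = (toDual ℝ E3).symm ((fderiv ℝ u (x, t)).comp (.inl ℝ E3 ℝ)) :=
  congrArg _ (h.hasFDerivAt.comp x (hasFDerivAt_prodMk_left x t)).fderiv

theorem hasDerivAt_ut (h : ContDiffAt ℝ 2 (fun s => u (x, s)) t) :
    HasDerivAt (fun s => ut u x s) (utt u x t) t :=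
  (h.differentiableAt_fderiv.clm_apply (differentiableAt_const 1)).hasDerivAt

theorem slap_eq_divx_sgrad (h : DifferentiableAt ℝ (fderiv ℝ (fun y => u (y, t))) x) :
    slap u x t = divx (fun y => sgrad u y t) x := by
  refine Finset.sum_congr rfl fun i _ => ?_
  rw [fderiv_clm_apply h (differentiableAt_const _)]
  simp only [fderiv_fun_const, Pi.zero_apply, ContinuousLinearMap.comp_zero, zero_add,
    ContinuousLinearMap.flip_apply]
  exact (inner_fderiv_gradient h _ _).symm

theorem exists_hasGradientAt_ut_hasDerivAt_sgrad (h : ContDiffAt ℝ 2 u (x, t)) :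
    ∃ w : E3, HasGradientAt (fun y => ut u y t) w x ∧ HasDerivAt (fun s => sgrad u x s) w t := by
  set B := fderiv ℝ (fderiv ℝ u) (x, t)
  have hB : HasFDerivAt (fderiv ℝ u) B (x, t) := h.differentiableAt_fderiv.hasFDerivAt
  have hdiff : ∀ᶠ p in 𝓝 (x, t), DifferentiableAt ℝ u p :=
    (h.eventually (by simp)).mono fun p hp => hp.differentiableAt two_ne_zero
  -- `∇u_t` and `∂_t ∇u` both represent the mixed second derivative `v ↦ B (v, 0) (0, 1)`
  refine ⟨(toDual ℝ E3).symm ((B (0, 1)).comp (.inl ℝ E3 ℝ)), ?_, ?_⟩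
  · rw [hasGradientAt_iff_hasFDerivAt, LinearIsometryEquiv.apply_symm_apply]
    have hD : HasFDerivAt (fun y => fderiv ℝ u (y, t)) (B.comp (.inl ℝ E3 ℝ)) x :=
      hB.comp x (hasFDerivAt_prodMk_left x t)
    refine ((hD.clm_apply (hasFDerivAt_const ((0, 1) : E3 × ℝ) x)).congr_of_eventuallyEq ?_)
      |>.congr_fderiv ?_
    · filter_upwards [(hasFDerivAt_prodMk_left (𝕜 := ℝ) x t).continuousAt.eventually hdiff]
        with y hy
      exact ut_eq_fderiv_apply hy
    · ext v
      simpa using h.isSymmSndFDerivAt (by simp) (v, 0) (0, 1)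
  · have hD := (toDual ℝ E3).symm.toContinuousLinearEquiv.hasFDerivAt.comp_hasDerivAt t
      ((hB.comp_hasDerivAt t (hasFDerivAt_prodMk_right x t).hasDerivAt).clm_comp
        (hasDerivAt_const t (ContinuousLinearMap.inl ℝ E3 ℝ)))
    refine (hD.congr_of_eventuallyEq ?_).congr_deriv ?_
    · filter_upwards [(hasFDerivAt_prodMk_right (𝕜 := ℝ) x t).continuousAt.eventually hdiff]
        with s hs
      exact sgrad_eq_toDual_symm hs
    · simp

end PartialDerivatives

theorem hasDerivAt_mul_Q0_add {u : E3 × ℝ → ℝ} {x : E3} {t : ℝ} {w : E3} (ht : t ≠ 0)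
    (hu : HasDerivAt (fun s => u (x, s)) (ut u x t) t)
    (hut : HasDerivAt (fun s => ut u x s) (utt u x t) t)
    (hg : HasDerivAt (fun s => sgrad u x s) w t) :
    HasDerivAt (fun s => s * Q0 u x s + ut u x s * u (x, s))
      (ut u x t ^ 2 / 2 + ‖sgrad u x t‖ ^ 2 / 2 + u (x, t) ^ 6 / 6 +
        t * (ut u x t * utt u x t + ⟪sgrad u x t, w⟫ + u (x, t) ^ 5 * ut u x t) +
        ⟪x, w⟫ * ut u x t + ⟪x, sgrad u x t⟫ * utt u x t + utt u x t * u (x, t) +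
        ut u x t ^ 2) t := by
  have hflux : (fun s => s * Q0 u x s + ut u x s * u (x, s)) =ᶠ[𝓝 t] fun s =>
      s * (ut u x s ^ 2 / 2 + ‖sgrad u x s‖ ^ 2 / 2 + u (x, s) ^ 6 / 6) +
        ⟪x, sgrad u x s⟫ * ut u x s + ut u x s * u (x, s) := by
    filter_upwards [eventually_ne_nhds ht] with s hs
    rw [Q0, real_inner_smul_left, Even.pow_abs ⟨3, rfl⟩]
    field_simp
  have hx := (innerSL ℝ x).hasFDerivAt.comp_hasDerivAt t hg
  have hd := ((hasDerivAt_id' t).mul ((((hut.pow 2).div_const 2).add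
    (hg.norm_sq.div_const 2)).add ((hu.pow 6).div_const 6))).add (hx.mul hut) |>.add (hut.mul hu)
  refine (hd.congr_deriv ?_).congr_of_eventuallyEq hflux
  simp only [Pi.pow_apply, Pi.add_apply, Nat.cast_ofNat, Nat.add_one_sub_one, pow_one,
    coe_innerSL_apply, Function.comp_apply]
  ring

theorem divx_smul_P0 {u : E3 × ℝ → ℝ} {x : E3} {t : ℝ} {w : E3} {H : E3 →L[ℝ] E3} (ht : t ≠ 0)
    (hu : HasGradientAt (fun y => u (y, t)) (sgrad u x t) x)
    (hut : HasGradientAt (fun y => ut u y t) w x)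
    (hg : HasFDerivAt (fun y => sgrad u y t) H x) (hH : ∀ a b, ⟪H a, b⟫ = ⟪H b, a⟫) :
    divx (fun y => t • P0 u y t) x =
      3 * (ut u x t ^ 2 / 2 - ‖sgrad u x t‖ ^ 2 / 2 - u (x, t) ^ 6 / 6) + ut u x t * ⟪x, w⟫ -
        u (x, t) ^ 5 * ⟪x, sgrad u x t⟫ + t * ⟪sgrad u x t, w⟫ + 2 * ‖sgrad u x t‖ ^ 2 +
        (t * ut u x t + ⟪x, sgrad u x t⟫ + u (x, t)) * divx (fun y => sgrad u y t) x := by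
  set S : E3 → ℝ := fun y => 2⁻¹ * (ut u y t ^ 2 - ‖sgrad u y t‖ ^ 2) - 6⁻¹ * u (y, t) ^ 6
  set N : E3 → ℝ := fun y => t * ut u y t + ⟪y, sgrad u y t⟫ + u (y, t)
  have hP : (fun y => t • P0 u y t) = fun y => S y • y + N y • sgrad u y t := by
    funext y
    simp only [P0, S, N, real_inner_smul_left, Even.pow_abs ⟨3, rfl⟩, smul_add, smul_smul]
    match_scalars <;> field_simp
  have hS : HasFDerivAt S _ x := (((hut.hasFDerivAt.pow 2).sub (hg.norm_sq)).const_mul 2⁻¹).sub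
    ((hu.hasFDerivAt.pow 6).const_mul 6⁻¹)
  have hN : HasFDerivAt N _ x :=
    ((hut.hasFDerivAt.const_mul t).add ((hasFDerivAt_id x).inner ℝ hg)).add hu.hasFDerivAt
  rw [hP, divx_add (hS.differentiableAt.fun_smul differentiableAt_fun_id)
    (hN.differentiableAt.fun_smul hg.differentiableAt), divx_smul hS differentiableAt_fun_id,
    divx_id, divx_smul hN hg.differentiableAt]
  simp only [S, N, Nat.add_one_sub_one, pow_one, nsmul_eq_mul, Nat.cast_ofNat, sub_apply,
    smul_apply, toDual_apply_apply, smul_eq_mul, ContinuousLinearMap.comp_apply,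
    coe_innerSL_apply, id_eq, add_apply, ContinuousLinearMap.prod_apply,
    ContinuousLinearMap.id_apply, fderivInnerCLM_apply, real_inner_self_eq_norm_sq]
  rw [real_inner_comm w x, real_inner_comm (H _) x, hH, real_inner_comm (H x),
    real_inner_comm x (sgrad u x t), real_inner_comm (sgrad u x t) w]
  ring

/-- identity (4.1): for any `C²` function `u` on an open set
`Ω ⊂ ℝ³ × ℝ`, at every point of `Ω` with `t ≠ 0`,
`(u_tt − Δu + u⁵)(t u_t + x·∇u + u) = ∂_t(t Q₀ + u_t u) − div_x(t P₀) + R₀`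
with `R₀ = |u|⁶/3`. -/
theorem statement15 (Ω : Set (E3 × ℝ)) (hΩ : IsOpen Ω) (u : E3 × ℝ → ℝ)
    (hu : ContDiffOn ℝ 2 u Ω) :
    ∀ (x : E3) (t : ℝ), (x, t) ∈ Ω → t ≠ 0 →
      (utt u x t - slap u x t + (u (x, t)) ^ 5) *
          (t * ut u x t + (inner ℝ x (sgrad u x t) : ℝ) + u (x, t)) =
        deriv (fun s => s * Q0 u x s + ut u x s * u (x, s)) t -
          divx (fun y => t • P0 u y t) x + |u (x, t)| ^ 6 / 3 := by
  intro x t hxt ht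
  have hC2 : ContDiffAt ℝ 2 u (x, t) := (hu _ hxt).contDiffAt (hΩ.mem_nhds hxt)
  have htime : ContDiffAt ℝ 2 (fun s => u (x, s)) t :=
    hC2.comp t (contDiffAt_const.prodMk contDiffAt_id)
  have hspace : ContDiffAt ℝ 2 (fun y => u (y, t)) x :=
    hC2.comp x (contDiffAt_id.prodMk contDiffAt_const)
  obtain ⟨w, hw_space, hw_time⟩ := exists_hasGradientAt_ut_hasDerivAt_sgrad hC2
  have hHess : HasFDerivAt (fun y => sgrad u y t) (fderiv ℝ (gradient fun y => u (y, t)) x) x :=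
    (hasFDerivAt_gradient hspace.differentiableAt_fderiv).differentiableAt.hasFDerivAt
  rw [(hasDerivAt_mul_Q0_add ht (htime.differentiableAt two_ne_zero).hasDerivAt
      (hasDerivAt_ut htime) hw_time).deriv,
    divx_smul_P0 ht (hspace.differentiableAt two_ne_zero).hasGradientAt hw_space hHess
      hspace.inner_fderiv_gradient_comm,
    ← slap_eq_divx_sgrad hspace.differentiableAt_fderiv, Even.pow_abs ⟨3, rfl⟩]
  ring
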